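/- For all integers m ≥ 2 and n ≥ 3: inspp(H^(4)_{m,n}) ≥ m and inspp(H^(5)_{m,n}) ≥ m. -/

import Mathlib

open SimpleGraph

/-- `G` contains an induced subgraph isomorphic to `H`. -/
def HasInducedCopy {V W : Type*} (G : SimpleGraph V) (H : SimpleGraph W) : Prop :=
  ∃ f : W ↪ V, ∀ a b : W, G.Adj (f a) (f b) ↔ H.Adj a b

/-- The star `K_{1,m}` (one center plus `m` leaves). -/
def starGraph (m : ℕ) : SimpleGraph (Unit ⊕ Fin m) := completeBipartiteGraph Unit (Fin m)

/-- `S` induces in `G` a subgraph isomorphic to a path `P_m` on `m ≥ 1` vertices. -/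
def IsInducedPathSet {V : Type*} (G : SimpleGraph V) (S : Set V) : Prop :=
  ∃ m : ℕ, 1 ≤ m ∧ Nonempty ((G.induce S) ≃g pathGraph m)

/-- `S` induces in `G` a subgraph isomorphic to a star `K_{1,m}` with `m ≥ 1`. -/
def IsInducedStarSet {V : Type*} (G : SimpleGraph V) (S : Set V) : Prop :=
  ∃ m : ℕ, 1 ≤ m ∧ Nonempty ((G.induce S) ≃g _root_.starGraph m)

/-- `S` consists of a single vertex (i.e. induces `K_1`). -/
def IsSingletonSet {V : Type*} (S : Set V) : Prop := ∃ v, S = {v}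

/-- `S` is the vertex set of an isometric (shortest) path of `G`. -/
def IsIsometricPathSet {V : Type*} (G : SimpleGraph V) (S : Set V) : Prop :=
  ∃ (u v : V) (p : G.Walk u v), p.IsPath ∧ p.length = G.dist u v ∧
    S = {x | x ∈ p.support}

/-- `P` is a family of sets, all satisfying `pred`, whose union is all of `V`. -/
def IsCoverBy {V : Type*} (P : Finset (Set V)) (pred : Set V → Prop) : Prop :=
  (∀ S ∈ P, pred S) ∧ ∀ v : V, ∃ S ∈ P, v ∈ S

/-- `P` is a cover by sets satisfying `pred`, whose members are pairwise disjoint. -/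
def IsPartitionBy {V : Type*} (P : Finset (Set V)) (pred : Set V → Prop) : Prop :=
  IsCoverBy P pred ∧ ∀ S ∈ P, ∀ T ∈ P, S ≠ T → ∀ v, v ∈ S → v ∉ T

/-- Minimum cardinality of a cover by sets satisfying `pred`. -/
noncomputable def coverNumber {V : Type*} (pred : Set V → Prop) : ℕ :=
  sInf {k | ∃ P : Finset (Set V), P.card = k ∧ IsCoverBy P pred}

/-- Minimum cardinality of a partition into sets satisfying `pred`. -/
noncomputable def partitionNumber {V : Type*} (pred : Set V → Prop) : ℕ :=
  sInf {k | ∃ P : Finset (Set V), P.card = k ∧ IsPartitionBy P pred}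

/-- The induced SP-cover number. -/
noncomputable def inspc {V : Type*} (G : SimpleGraph V) : ℕ :=
  coverNumber (fun S => IsInducedStarSet G S ∨ IsInducedPathSet G S)

/-- The induced SP-partition number. -/
noncomputable def inspp {V : Type*} (G : SimpleGraph V) : ℕ :=
  partitionNumber (fun S => IsInducedStarSet G S ∨ IsInducedPathSet G S)

/-- The induced star cover number. -/
noncomputable def insc {V : Type*} (G : SimpleGraph V) : ℕ :=
  coverNumber (fun S => IsInducedStarSet G S ∨ IsSingletonSet S)

/-- The induced star partition number. -/
noncomputable def insp {V : Type*} (G : SimpleGraph V) : ℕ :=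
  partitionNumber (fun S => IsInducedStarSet G S ∨ IsSingletonSet S)

/-- The induced path cover number. -/
noncomputable def inpc {V : Type*} (G : SimpleGraph V) : ℕ :=
  coverNumber (fun S => IsInducedPathSet G S)

/-- The induced path partition number. -/
noncomputable def inpp {V : Type*} (G : SimpleGraph V) : ℕ :=
  partitionNumber (fun S => IsInducedPathSet G S)

/-- The isometric path cover number. -/
noncomputable def ispc {V : Type*} (G : SimpleGraph V) : ℕ :=
  coverNumber (fun S => IsIsometricPathSet G S)

/-- The isometric path partition number. -/
noncomputable def ispp {V : Type*} (G : SimpleGraph V) : ℕ :=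
  partitionNumber (fun S => IsIsometricPathSet G S)

/-- `S*_n` : center `x = inl ()`, middle vertices `y i = inr (inl i)`,
leaves `z i = inr (inr i)`; edges `x yᵢ` and `yᵢ zᵢ`. -/
def SStar (n : ℕ) : SimpleGraph (Unit ⊕ Fin n ⊕ Fin n) :=
  SimpleGraph.fromRel (fun a b =>
    (∃ i : Fin n, a = Sum.inl () ∧ b = Sum.inr (Sum.inl i)) ∨
    (∃ i : Fin n, a = Sum.inr (Sum.inl i) ∧ b = Sum.inr (Sum.inr i)))

/-- `S̃_n` : `S*_n` together with the edges `x zᵢ`. -/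
def STilde (n : ℕ) : SimpleGraph (Unit ⊕ Fin n ⊕ Fin n) :=
  SimpleGraph.fromRel (fun a b =>
    (∃ i : Fin n, a = Sum.inl () ∧ b = Sum.inr (Sum.inl i)) ∨
    (∃ i : Fin n, a = Sum.inr (Sum.inl i) ∧ b = Sum.inr (Sum.inr i)) ∨
    (∃ i : Fin n, a = Sum.inl () ∧ b = Sum.inr (Sum.inr i)))

/-- `F⁽¹⁾_n` : vertices `x₁ = inl 0`, `x₂ = inl 1`, `yᵢ = inr (inl i)`, `zᵢ = inr (inr i)`;
edges `x₁x₂`, `x₁y₁`, `x₁z₁`, and two paths `y₁⋯yₙ`, `z₁⋯zₙ`. -/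
def F1 (n : ℕ) : SimpleGraph (Fin 2 ⊕ Fin n ⊕ Fin n) :=
  SimpleGraph.fromRel (fun a b =>
    (a = Sum.inl 0 ∧ b = Sum.inl 1) ∨
    (∃ j : Fin n, (j : ℕ) = 0 ∧ a = Sum.inl 0 ∧ b = Sum.inr (Sum.inl j)) ∨
    (∃ j : Fin n, (j : ℕ) = 0 ∧ a = Sum.inl 0 ∧ b = Sum.inr (Sum.inr j)) ∨
    (∃ i j : Fin n, (i : ℕ) + 1 = (j : ℕ) ∧ a = Sum.inr (Sum.inl i) ∧ b = Sum.inr (Sum.inl j)) ∨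
    (∃ i j : Fin n, (i : ℕ) + 1 = (j : ℕ) ∧ a = Sum.inr (Sum.inr i) ∧ b = Sum.inr (Sum.inr j)))

/-- `F⁽²⁾_n` : vertex `x₁ = inl ()`, `yᵢ = inr (inl i)`, `zᵢ = inr (inr i)`;
edges `x₁y₁`, `x₁z₁`, `y₁z₁`, and two paths `y₁⋯yₙ`, `z₁⋯zₙ`. -/
def F2 (n : ℕ) : SimpleGraph (Unit ⊕ Fin n ⊕ Fin n) :=
  SimpleGraph.fromRel (fun a b =>
    (∃ j : Fin n, (j : ℕ) = 0 ∧ a = Sum.inl () ∧ b = Sum.inr (Sum.inl j)) ∨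
    (∃ j : Fin n, (j : ℕ) = 0 ∧ a = Sum.inl () ∧ b = Sum.inr (Sum.inr j)) ∨
    (∃ i j : Fin n, (i : ℕ) = 0 ∧ (j : ℕ) = 0 ∧ a = Sum.inr (Sum.inl i) ∧ b = Sum.inr (Sum.inr j)) ∨
    (∃ i j : Fin n, (i : ℕ) + 1 = (j : ℕ) ∧ a = Sum.inr (Sum.inl i) ∧ b = Sum.inr (Sum.inl j)) ∨
    (∃ i j : Fin n, (i : ℕ) + 1 = (j : ℕ) ∧ a = Sum.inr (Sum.inr i) ∧ b = Sum.inr (Sum.inr j)))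

/-- `F⁽³⁾_n` : vertices `xᵢ = inl i`, `yᵢ = inr (inl i)`, `zᵢ = inr (inr i)`;
edges `xᵢy₁`, `xᵢz₁` for all `i`, and two paths `y₁⋯yₙ`, `z₁⋯zₙ`. -/
def F3 (n : ℕ) : SimpleGraph (Fin n ⊕ Fin n ⊕ Fin n) :=
  SimpleGraph.fromRel (fun a b =>
    (∃ (i j : Fin n), (j : ℕ) = 0 ∧ a = Sum.inl i ∧ b = Sum.inr (Sum.inl j)) ∨
    (∃ (i j : Fin n), (j : ℕ) = 0 ∧ a = Sum.inl i ∧ b = Sum.inr (Sum.inr j)) ∨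
    (∃ i j : Fin n, (i : ℕ) + 1 = (j : ℕ) ∧ a = Sum.inr (Sum.inl i) ∧ b = Sum.inr (Sum.inl j)) ∨
    (∃ i j : Fin n, (i : ℕ) + 1 = (j : ℕ) ∧ a = Sum.inr (Sum.inr i) ∧ b = Sum.inr (Sum.inr j)))

/-- `F⁽⁴⁾_n` : `F⁽³⁾_n` with only `x₁, x₂` kept (no edge `x₁x₂`). -/
def F4 (n : ℕ) : SimpleGraph (Fin 2 ⊕ Fin n ⊕ Fin n) :=
  SimpleGraph.fromRel (fun a b =>
    (∃ (i : Fin 2) (j : Fin n), (j : ℕ) = 0 ∧ a = Sum.inl i ∧ b = Sum.inr (Sum.inl j)) ∨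
    (∃ (i : Fin 2) (j : Fin n), (j : ℕ) = 0 ∧ a = Sum.inl i ∧ b = Sum.inr (Sum.inr j)) ∨
    (∃ i j : Fin n, (i : ℕ) + 1 = (j : ℕ) ∧ a = Sum.inr (Sum.inl i) ∧ b = Sum.inr (Sum.inl j)) ∨
    (∃ i j : Fin n, (i : ℕ) + 1 = (j : ℕ) ∧ a = Sum.inr (Sum.inr i) ∧ b = Sum.inr (Sum.inr j)))

/-- `F⁽⁵⁾_n` : `F⁽⁴⁾_n` plus the edge `x₁x₂`. -/
def F5 (n : ℕ) : SimpleGraph (Fin 2 ⊕ Fin n ⊕ Fin n) :=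
  SimpleGraph.fromRel (fun a b =>
    (a = Sum.inl 0 ∧ b = Sum.inl 1) ∨
    (∃ (i : Fin 2) (j : Fin n), (j : ℕ) = 0 ∧ a = Sum.inl i ∧ b = Sum.inr (Sum.inl j)) ∨
    (∃ (i : Fin 2) (j : Fin n), (j : ℕ) = 0 ∧ a = Sum.inl i ∧ b = Sum.inr (Sum.inr j)) ∨
    (∃ i j : Fin n, (i : ℕ) + 1 = (j : ℕ) ∧ a = Sum.inr (Sum.inl i) ∧ b = Sum.inr (Sum.inl j)) ∨
    (∃ i j : Fin n, (i : ℕ) + 1 = (j : ℕ) ∧ a = Sum.inr (Sum.inr i) ∧ b = Sum.inr (Sum.inr j)))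

/-- The Ramsey number `R(a,b)` : least `R` such that every simple graph on at least `R`
vertices contains a clique of size `a` or an independent set of size `b`. -/
noncomputable def ramseyNumber (a b : ℕ) : ℕ :=
  sInf {R : ℕ | ∀ (m : ℕ) (G : SimpleGraph (Fin m)), R ≤ m →
    (∃ s : Finset (Fin m), s.card = a ∧ ∀ u ∈ s, ∀ v ∈ s, u ≠ v → G.Adj u v) ∨
    (∃ s : Finset (Fin m), s.card = b ∧ ∀ u ∈ s, ∀ v ∈ s, u ≠ v → ¬ G.Adj u v)}

/-- `ξ_{n,i} = ((R(n-1,n)-1)^i - 1)/(R(n-1,n)-2)`. -/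
noncomputable def xi (n i : ℕ) : ℕ :=
  ((ramseyNumber (n - 1) n - 1) ^ i - 1) / (ramseyNumber (n - 1) n - 2)
/-- `H⁽¹⁾_{m,n}` : `m` disjoint paths `u i 1 ⋯ u i n` (`u i j = inl (i,j)`), plus vertices
`v i = inr (inl i)`, `w i = inr (inr i)` and edges `vᵢwᵢ`, `vᵢ uᵢⁿ`, `vᵢ uᵢ₊₁¹`. -/
def H1 (m n : ℕ) : SimpleGraph ((Fin m × Fin n) ⊕ (Fin (m - 1) ⊕ Fin (m - 1))) :=
  SimpleGraph.fromRel (fun a b =>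
    (∃ (i : Fin m) (j j' : Fin n), (j : ℕ) + 1 = (j' : ℕ) ∧
      a = Sum.inl (i, j) ∧ b = Sum.inl (i, j')) ∨
    (∃ i : Fin (m - 1), a = Sum.inr (Sum.inl i) ∧ b = Sum.inr (Sum.inr i)) ∨
    (∃ (i : Fin (m - 1)) (p : Fin m) (q : Fin n), (p : ℕ) = (i : ℕ) ∧ (q : ℕ) = n - 1 ∧
      a = Sum.inr (Sum.inl i) ∧ b = Sum.inl (p, q)) ∨
    (∃ (i : Fin (m - 1)) (p : Fin m) (q : Fin n), (p : ℕ) = (i : ℕ) + 1 ∧ (q : ℕ) = 0 ∧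
      a = Sum.inr (Sum.inl i) ∧ b = Sum.inl (p, q)))

/-- `H⁽²⁾_{m,n}` : `m` disjoint paths plus vertices `vᵢ = inr i` and edges
`vᵢ uᵢⁿ`, `vᵢ uᵢ₊₁¹`, `uᵢⁿ uᵢ₊₁¹`. -/
def H2 (m n : ℕ) : SimpleGraph ((Fin m × Fin n) ⊕ Fin (m - 1)) :=
  SimpleGraph.fromRel (fun a b =>
    (∃ (i : Fin m) (j j' : Fin n), (j : ℕ) + 1 = (j' : ℕ) ∧
      a = Sum.inl (i, j) ∧ b = Sum.inl (i, j')) ∨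
    (∃ (i : Fin (m - 1)) (p : Fin m) (q : Fin n), (p : ℕ) = (i : ℕ) ∧ (q : ℕ) = n - 1 ∧
      a = Sum.inr i ∧ b = Sum.inl (p, q)) ∨
    (∃ (i : Fin (m - 1)) (p : Fin m) (q : Fin n), (p : ℕ) = (i : ℕ) + 1 ∧ (q : ℕ) = 0 ∧
      a = Sum.inr i ∧ b = Sum.inl (p, q)) ∨
    (∃ (p p' : Fin m) (q q' : Fin n), (p : ℕ) + 1 = (p' : ℕ) ∧ (q : ℕ) = n - 1 ∧ (q' : ℕ) = 0 ∧
      a = Sum.inl (p, q) ∧ b = Sum.inl (p', q')))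

/-- `H⁽³⁾_{m,n}` : `m` disjoint paths plus vertices `v i t = inr (i, t)` (`t : Fin m`)
and edges `v i t uᵢⁿ`, `v i t uᵢ₊₁¹`. -/
def H3 (m n : ℕ) : SimpleGraph ((Fin m × Fin n) ⊕ (Fin (m - 1) × Fin m)) :=
  SimpleGraph.fromRel (fun a b =>
    (∃ (i : Fin m) (j j' : Fin n), (j : ℕ) + 1 = (j' : ℕ) ∧
      a = Sum.inl (i, j) ∧ b = Sum.inl (i, j')) ∨
    (∃ (i : Fin (m - 1)) (t : Fin m) (p : Fin m) (q : Fin n),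
      (p : ℕ) = (i : ℕ) ∧ (q : ℕ) = n - 1 ∧ a = Sum.inr (i, t) ∧ b = Sum.inl (p, q)) ∨
    (∃ (i : Fin (m - 1)) (t : Fin m) (p : Fin m) (q : Fin n),
      (p : ℕ) = (i : ℕ) + 1 ∧ (q : ℕ) = 0 ∧ a = Sum.inr (i, t) ∧ b = Sum.inl (p, q)))

/-- `H⁽⁴⁾_{m,n}` : `m` disjoint paths plus vertices `v i t = inr (i, t)` (`t : Fin 2`)
and edges `v i t uᵢⁿ`, `v i t uᵢ₊₁¹`. -/
def H4 (m n : ℕ) : SimpleGraph ((Fin m × Fin n) ⊕ (Fin (m - 1) × Fin 2)) :=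
  SimpleGraph.fromRel (fun a b =>
    (∃ (i : Fin m) (j j' : Fin n), (j : ℕ) + 1 = (j' : ℕ) ∧
      a = Sum.inl (i, j) ∧ b = Sum.inl (i, j')) ∨
    (∃ (i : Fin (m - 1)) (t : Fin 2) (p : Fin m) (q : Fin n),
      (p : ℕ) = (i : ℕ) ∧ (q : ℕ) = n - 1 ∧ a = Sum.inr (i, t) ∧ b = Sum.inl (p, q)) ∨
    (∃ (i : Fin (m - 1)) (t : Fin 2) (p : Fin m) (q : Fin n),
      (p : ℕ) = (i : ℕ) + 1 ∧ (q : ℕ) = 0 ∧ a = Sum.inr (i, t) ∧ b = Sum.inl (p, q)))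

/-- `H⁽⁵⁾_{m,n}` : `H⁽⁴⁾_{m,n}` plus the edges `v i 1 ~ v i 2`. -/
def H5 (m n : ℕ) : SimpleGraph ((Fin m × Fin n) ⊕ (Fin (m - 1) × Fin 2)) :=
  SimpleGraph.fromRel (fun a b =>
    (∃ (i : Fin m) (j j' : Fin n), (j : ℕ) + 1 = (j' : ℕ) ∧
      a = Sum.inl (i, j) ∧ b = Sum.inl (i, j')) ∨
    (∃ (i : Fin (m - 1)) (t : Fin 2) (p : Fin m) (q : Fin n),
      (p : ℕ) = (i : ℕ) ∧ (q : ℕ) = n - 1 ∧ a = Sum.inr (i, t) ∧ b = Sum.inl (p, q)) ∨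
    (∃ (i : Fin (m - 1)) (t : Fin 2) (p : Fin m) (q : Fin n),
      (p : ℕ) = (i : ℕ) + 1 ∧ (q : ℕ) = 0 ∧ a = Sum.inr (i, t) ∧ b = Sum.inl (p, q)) ∨
    (∃ i : Fin (m - 1), a = Sum.inr (i, 0) ∧ b = Sum.inr (i, 1)))

/-!
Every part of an induced SP-partition induces a connected graph with no 4-cycle. The two links
`v_{c,1}, v_{c,2}` of gate `c` lie on the 4-cycle `u_c^(n) v_{c,1} u_{c+1}^(1) v_{c,2}`, and every
edge leaving the first `c + 1` paths joins `u_c^(n)` to one of these links. Hence a part containing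
both `u_c^(n)` and `u_{c+1}^(1)` contains exactly one link of gate `c`, and the other link, all of
whose neighbours lie in that part, forms a singleton part. Charge path `i` to the part of its first
vertex if that part avoids the last vertex of path `i - 1`, and to this singleton otherwise: distinct
paths are charged to distinct parts, so there are at least `m` parts.
-/

abbrev IsInducedSPSet {V : Type*} (G : SimpleGraph V) (S : Set V) : Prop :=
  IsInducedStarSet G S ∨ IsInducedPathSet G S

namespace SimpleGraph

variable {V W : Type*} {G : SimpleGraph V} {S : Set V}

theorem exists_adj_boundary_of_connected_induce (hS : (G.induce S).Connected) {A : Set V}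
    {x y : V} (hx : x ∈ S) (hy : y ∈ S) (hxA : x ∈ A) (hyA : y ∉ A) :
    ∃ a ∈ S, ∃ b ∈ S, a ∈ A ∧ b ∉ A ∧ G.Adj a b := by
  obtain ⟨w⟩ := hS.preconnected ⟨x, hx⟩ ⟨y, hy⟩
  obtain ⟨d, -, hdA, hdA'⟩ := w.exists_boundary_dart {z | z.1 ∈ A} hxA hyA
  exact ⟨d.fst, d.fst.2, d.snd, d.snd.2, hdA, hdA', d.adj⟩

theorem eq_singleton_of_connected_induce (hS : (G.induce S).Connected) {v : V} (hv : v ∈ S)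
    (h : ∀ z ∈ S, ¬ G.Adj v z) : S = {v} := by
  refine Set.eq_singleton_iff_unique_mem.2 ⟨hv, fun y hy => by_contra fun hyv => ?_⟩
  obtain ⟨a, -, b, hb, rfl, -, hab⟩ :=
    exists_adj_boundary_of_connected_induce hS hv hy (A := {v}) rfl hyv
  exact h b hb hab

theorem Iso.commonNeighbors_subsingleton {K : SimpleGraph W} (e : G ≃g K)
    (hK : ∀ a c, a ≠ c → (K.commonNeighbors a c).Subsingleton) {a c : V} (hac : a ≠ c) :
    (G.commonNeighbors a c).Subsingleton := by
  intro b hb d hd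
  rw [mem_commonNeighbors, ← e.map_adj_iff, ← e.map_adj_iff] at hb hd
  exact e.injective (hK _ _ (e.injective.ne hac) hb hd)

theorem pathGraph_commonNeighbors_subsingleton {k : ℕ} (a c : Fin k) (hac : a ≠ c) :
    ((pathGraph k).commonNeighbors a c).Subsingleton := by
  intro b hb d hd
  simp only [mem_commonNeighbors, pathGraph_adj] at hb hd
  have := Fin.val_ne_of_ne hac
  exact Fin.ext (by omega)

end SimpleGraph

open SimpleGraph

theorem starGraph_commonNeighbors_subsingleton {k : ℕ} (a c : Unit ⊕ Fin k) (hac : a ≠ c) :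
    ((_root_.starGraph k).commonNeighbors a c).Subsingleton := by
  intro b hb d hd
  rcases a with a | a <;> rcases c with c | c <;> rcases b with b | b <;> rcases d with d | d <;>
    simp_all [mem_commonNeighbors, _root_.starGraph]

namespace IsInducedSPSet

variable {V : Type*} {G : SimpleGraph V} {S : Set V}

theorem connected (hS : IsInducedSPSet G S) : (G.induce S).Connected := by
  rcases hS with ⟨k, -, ⟨e⟩⟩ | ⟨k, hk, ⟨e⟩⟩
  · refine e.connected_iff.2 (connected_iff_exists_forall_reachable _ |>.2 ⟨Sum.inl (), ?_⟩)
    rintro (⟨⟩ | i)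
    exacts [Reachable.refl _, Adj.reachable (by simp [_root_.starGraph])]
  · obtain ⟨k, rfl⟩ : ∃ j, k = j + 1 := ⟨k - 1, by omega⟩
    exact e.connected_iff.2 (pathGraph_connected k)

theorem commonNeighbors_subsingleton (hS : IsInducedSPSet G S) {a c : V} (ha : a ∈ S)
    (hc : c ∈ S) (hac : a ≠ c) : (S ∩ G.commonNeighbors a c).Subsingleton := by
  have key : ((G.induce S).commonNeighbors ⟨a, ha⟩ ⟨c, hc⟩).Subsingleton := by
    rcases hS with ⟨k, -, ⟨e⟩⟩ | ⟨k, -, ⟨e⟩⟩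
    · exact e.commonNeighbors_subsingleton starGraph_commonNeighbors_subsingleton
        (by simpa using hac)
    · exact e.commonNeighbors_subsingleton pathGraph_commonNeighbors_subsingleton
        (by simpa using hac)
  rintro b ⟨hbS, hb⟩ d ⟨hdS, hd⟩
  exact congrArg Subtype.val (@key ⟨b, hbS⟩ hb ⟨d, hdS⟩ hd)

end IsInducedSPSet

theorem isInducedPathSet_singleton {V : Type*} (G : SimpleGraph V) (v : V) :
    IsInducedPathSet G {v} :=
  ⟨1, le_rfl, ⟨{ toEquiv := Equiv.ofUnique _ _
                 map_rel_iff' := fun {a b} => by rw [Subsingleton.elim b a]; simp }⟩⟩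

theorem isPartitionBy_singletons {V : Type*} [Fintype V] [DecidableEq V]
    {pred : Set V → Prop} (hpred : ∀ v, pred {v}) :
    IsPartitionBy (Finset.univ.image fun v : V => ({v} : Set V)) pred := by
  refine ⟨⟨?_, fun v => ⟨{v}, by simp, rfl⟩⟩, ?_⟩
  · simp only [Finset.mem_image, Finset.mem_univ, true_and, forall_exists_index]
    rintro _ v rfl
    exact hpred v
  · simp only [Finset.mem_image, Finset.mem_univ, true_and]
    rintro _ ⟨v, rfl⟩ _ ⟨w, rfl⟩ hvw x rfl rfl
    exact hvw rfl

theorem IsPartitionBy.eq_of_mem_of_mem {V : Type*} {P : Finset (Set V)} {pred : Set V → Prop}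
    (hP : IsPartitionBy P pred) {S T : Set V} {v : V} (hS : S ∈ P) (hT : T ∈ P) (hvS : v ∈ S)
    (hvT : v ∈ T) : S = T :=
  by_contra fun hne => hP.2 S hS T hT hne v hvS hvT

theorem le_partitionNumber {V : Type*} [Finite V] {pred : Set V → Prop} {k : ℕ}
    (hpred : ∀ v, pred {v}) (hk : ∀ P, IsPartitionBy P pred → k ≤ P.card) :
    k ≤ partitionNumber pred := by
  classical
  have := Fintype.ofFinite V
  exact le_csInf ⟨_, _, rfl, isPartitionBy_singletons hpred⟩ fun _ ⟨P, hPk, hP⟩ => hPk ▸ hk P hP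

namespace PathChain

variable {m k : ℕ}

abbrev Vertex (m n : ℕ) := (Fin m × Fin n) ⊕ (Fin (m - 1) × Fin 2)

/- Gate `c : Fin (m - 1)` joins the last vertex of path `lo c` to the first vertex of path `hi c`
through the two links `link c t`. -/
def lo (c : Fin (m - 1)) : Fin m := ⟨c, by omega⟩

def hi (c : Fin (m - 1)) : Fin m := ⟨c + 1, by omega⟩

def firstVert (i : Fin m) : Vertex m (k + 1) := Sum.inl (i, 0)

def lastVert (i : Fin m) : Vertex m (k + 1) := Sum.inl (i, Fin.last k)

def link (c : Fin (m - 1)) (t : Fin 2) : Vertex m (k + 1) := Sum.inr (c, t)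

def leftOf (c : Fin (m - 1)) : Set (Vertex m (k + 1)) :=
  {x | Sum.elim (fun p => (p.1 : ℕ) ≤ c) (fun p => (p.1 : ℕ) < c) x}

theorem H4_le_H5 {n : ℕ} : H4 m n ≤ H5 m n := by
  intro a b h
  rw [H4, fromRel_adj] at h
  rw [H5, fromRel_adj]
  exact ⟨h.1, h.2.imp (·.imp_right (·.imp_right .inl)) (·.imp_right (·.imp_right .inl))⟩

theorem H4_adj_lastVert_link (c : Fin (m - 1)) (t : Fin 2) :
    (H4 m (k + 1)).Adj (lastVert (lo c)) (link c t) := by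
  rw [H4, fromRel_adj]
  exact ⟨Sum.inl_ne_inr, Or.inr (Or.inr (Or.inl ⟨c, t, _, _, rfl, by simp, rfl, rfl⟩))⟩

theorem H4_adj_firstVert_link (c : Fin (m - 1)) (t : Fin 2) :
    (H4 m (k + 1)).Adj (firstVert (hi c)) (link c t) := by
  rw [H4, fromRel_adj]
  exact ⟨Sum.inl_ne_inr, Or.inr (Or.inr (Or.inr ⟨c, t, _, _, rfl, rfl, rfl, rfl⟩))⟩

theorem H5_adj_link {c : Fin (m - 1)} {t : Fin 2} {x : Vertex m (k + 1)}
    (h : (H5 m (k + 1)).Adj (link c t) x) :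
    x = lastVert (lo c) ∨ x = firstVert (hi c) ∨ ∃ s, x = link c s := by
  rw [H5, fromRel_adj] at h
  rcases x with ⟨p, q⟩ | ⟨i, s⟩ <;>
    simp [link, lastVert, firstVert, lo, hi] at h ⊢ <;>
    simp only [Fin.ext_iff, Fin.val_last, Fin.val_zero] at * <;> omega

theorem H5_adj_leftOf {c : Fin (m - 1)} {x y : Vertex m (k + 1)} (h : (H5 m (k + 1)).Adj x y)
    (hx : x ∈ leftOf c) (hy : y ∉ leftOf c) : x = lastVert (lo c) ∧ ∃ t, y = link c t := by
  rw [H5, fromRel_adj] at h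
  rcases x with ⟨p, q⟩ | ⟨i, s⟩ <;> rcases y with ⟨p', q'⟩ | ⟨i', s'⟩ <;>
    simp [leftOf, link, lastVert, lo] at h hx hy ⊢ <;>
    simp only [Fin.ext_iff, Fin.val_last, Fin.val_zero, Fin.lt_def, Fin.le_def] at * <;> omega

section Partition

variable {G : SimpleGraph (Vertex m (k + 1))} {S : Set (Vertex m (k + 1))}

theorem lastVert_mem_and_exists_link_mem (h5 : G ≤ H5 m (k + 1)) (hS : IsInducedSPSet G S)
    {c : Fin (m - 1)} {x y : Vertex m (k + 1)} (hx : x ∈ S) (hy : y ∈ S) (hxc : x ∈ leftOf c)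
    (hyc : y ∉ leftOf c) : lastVert (lo c) ∈ S ∧ ∃ t, link c t ∈ S := by
  obtain ⟨a, ha, b, hb, hac, hbc, hab⟩ :=
    exists_adj_boundary_of_connected_induce hS.connected hx hy hxc hyc
  obtain ⟨rfl, t, rfl⟩ := H5_adj_leftOf (h5 hab) hac hbc
  exact ⟨ha, t, hb⟩

theorem exists_lastVert_mem_of_firstVert_mem (h5 : G ≤ H5 m (k + 1)) (hS : IsInducedSPSet G S)
    {i j : Fin m} (hiS : firstVert i ∈ S) (hjS : firstVert j ∈ S) (hij : i < j) :
    ∃ c, hi c = j ∧ lastVert (lo c) ∈ S := by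
  have hc : (j : ℕ) - 1 < m - 1 := by omega
  refine ⟨⟨j - 1, hc⟩, Fin.ext (by simp only [hi]; omega), ?_⟩
  refine (lastVert_mem_and_exists_link_mem h5 hS hiS hjS ?_ ?_).1 <;>
    simp only [leftOf, firstVert, Set.mem_ofPred_eq, Sum.elim_inl] <;> omega

variable {P : Finset (Set (Vertex m (k + 1)))}

theorem exists_singleton_link_mem (h4 : H4 m (k + 1) ≤ G) (h5 : G ≤ H5 m (k + 1))
    (hP : IsPartitionBy P (IsInducedSPSet G)) (hS : S ∈ P) {c : Fin (m - 1)}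
    (hlast : lastVert (lo c) ∈ S) (hfirst : firstVert (hi c) ∈ S) :
    ∃ t, {link c t} ∈ P := by
  have hSP := hP.1.1 S hS
  obtain ⟨t, ht⟩ := (lastVert_mem_and_exists_link_mem (c := c) h5 hSP hlast hfirst
    (by simp [leftOf, lastVert, lo]) (by simp [leftOf, firstVert, hi])).2
  obtain ⟨t', ht't⟩ := exists_ne t
  have adj_link : ∀ s, G.Adj (lastVert (lo c)) (link c s) ∧ G.Adj (firstVert (hi c)) (link c s) :=
    fun s => ⟨h4 (H4_adj_lastVert_link c s), h4 (H4_adj_firstVert_link c s)⟩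
  -- otherwise `S` would contain the 4-cycle through both links of the gate
  have ht'S : link c t' ∉ S := fun ht'S => ht't <| by
    simpa [link] using hSP.commonNeighbors_subsingleton hlast hfirst
      (by simp [lastVert, firstVert, lo, hi]) ⟨ht'S, adj_link t'⟩ ⟨ht, adj_link t⟩
  obtain ⟨T, hT, ht'T⟩ := hP.1.2 (link c t')
  refine ⟨t', (eq_singleton_of_connected_induce (hP.1.1 T hT).connected ht'T ?_) ▸ hT⟩
  intro z hzT hadj
  have hzS : z ∈ S := by
    rcases H5_adj_link (h5 hadj) with rfl | rfl | ⟨s, rfl⟩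
    · exact hlast
    · exact hfirst
    · obtain rfl : s = t := by
        have : s ≠ t' := fun h => hadj.ne (by rw [h])
        omega
      exact ht
  exact ht'S (hP.eq_of_mem_of_mem hS hT hzS hzT ▸ ht'T)

def IsChargedTo (S : Set (Vertex m (k + 1))) (i : Fin m) : Prop :=
  (firstVert i ∈ S ∧ ∀ c, hi c = i → lastVert (lo c) ∉ S) ∨ ∃ c t, hi c = i ∧ S = {link c t}

theorem exists_isChargedTo (h4 : H4 m (k + 1) ≤ G) (h5 : G ≤ H5 m (k + 1))
    (hP : IsPartitionBy P (IsInducedSPSet G)) (i : Fin m) : ∃ S ∈ P, IsChargedTo S i := by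
  obtain ⟨S, hS, hiS⟩ := hP.1.2 (firstVert i)
  by_cases h : ∃ c, hi c = i ∧ lastVert (lo c) ∈ S
  · obtain ⟨c, rfl, hc⟩ := h
    obtain ⟨t, ht⟩ := exists_singleton_link_mem h4 h5 hP hS hc hiS
    exact ⟨_, ht, .inr ⟨c, t, rfl, rfl⟩⟩
  · exact ⟨S, hS, .inl ⟨hiS, fun c hc hcS => h ⟨c, hc, hcS⟩⟩⟩

theorem IsChargedTo.eq (h5 : G ≤ H5 m (k + 1)) (hS : IsInducedSPSet G S) {i j : Fin m}
    (hSi : IsChargedTo S i) (hSj : IsChargedTo S j) : i = j := by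
  rcases hSi with ⟨hiS, hi'⟩ | ⟨c, t, rfl, rfl⟩ <;> rcases hSj with ⟨hjS, hj'⟩ | ⟨c', t', rfl, h⟩
  · by_contra hne
    rcases lt_or_gt_of_ne hne with hij | hij
    · obtain ⟨c, hc, hcS⟩ := exists_lastVert_mem_of_firstVert_mem h5 hS hiS hjS hij
      exact hj' c hc hcS
    · obtain ⟨c, hc, hcS⟩ := exists_lastVert_mem_of_firstVert_mem h5 hS hjS hiS hij
      exact hi' c hc hcS
  · simp [h, firstVert, link] at hiS
  · simp [firstVert, link] at hjS
  · simp only [Set.singleton_eq_singleton_iff, link, Sum.inr.injEq, Prod.mk.injEq] at h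
    rw [h.1]

theorem card_le_of_isPartitionBy (h4 : H4 m (k + 1) ≤ G) (h5 : G ≤ H5 m (k + 1))
    (hP : IsPartitionBy P (IsInducedSPSet G)) : m ≤ P.card := by
  choose S hSP hS using exists_isChargedTo h4 h5 hP
  simpa using Finset.card_le_card_of_injOn (s := Finset.univ) S (fun i _ => hSP i)
    fun i _ j _ hij => (hS i).eq h5 (hP.1.1 _ (hSP i)) (hij ▸ hS j)

theorem le_inspp (h4 : H4 m (k + 1) ≤ G) (h5 : G ≤ H5 m (k + 1)) : m ≤ inspp G :=
  le_partitionNumber (fun v => .inr (isInducedPathSet_singleton G v))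
    fun _ hP => card_le_of_isPartitionBy h4 h5 hP

end Partition

end PathChain

theorem statement_19_general (m n : ℕ) (hn : 3 ≤ n) :
    m ≤ inspp (H4 m n) ∧ m ≤ inspp (H5 m n) := by
  obtain ⟨k, rfl⟩ : ∃ k, n = k + 1 := ⟨n - 1, by omega⟩
  exact ⟨PathChain.le_inspp le_rfl PathChain.H4_le_H5, PathChain.le_inspp PathChain.H4_le_H5 le_rfl⟩

theorem statement_19 (m n : ℕ) (hm : 2 ≤ m) (hn : 3 ≤ n) :
    m ≤ inspp (H4 m n) ∧ m ≤ inspp (H5 m n) :=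
  statement_19_general m n hn
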